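/- Let M = 1 and N = 2. For all real α1, α2 with 0 < α2 < 1 < α1, the mixed-interference GDOF expression satisfies D_m(α1, α2) ≥ 2/3, the generalized degrees of freedom achieved by an orthogonal scheme. -/

import Mathlib

/-- Mixed-interference GDOF expression for the 3-user M×N partially asymmetric
MIMO Gaussian interference channel with cross-link exponents 0 < α2 < 1 < α1. -/
noncomputable def Dm (M N : ℕ) (α1 α2 : ℝ) : ℝ :=
  min (M : ℝ)
    (min ((2 * (M : ℝ) + M * α1 + ((N : ℝ) - 3 * M) * α2) / 3)
      (max (((M : ℝ) + M * α1 + ((N : ℝ) - 3 * M) * α2) / 2)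
        (((M : ℝ) + ((N : ℝ) - 2 * M) * α1 + (3 * (M : ℝ) - N) * α2) / 2)))

theorem le_max_of_le_add_div_two {α : Type*} [Field α] [LinearOrder α] [IsStrictOrderedRing α]
    {a b c : α} (h : c ≤ (a + b) / 2) : c ≤ max a b := by
  linarith [le_max_left a b, le_max_right a b]

theorem Dm_one_two (α1 α2 : ℝ) :
    Dm 1 2 α1 α2 =
      min 1 (min ((2 + α1 - α2) / 3) (max ((1 + α1 - α2) / 2) ((1 + α2) / 2))) := by
  simp only [Dm, Nat.cast_one, Nat.cast_ofNat]
  ring_nf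

theorem Dm_ge_orthogonal_one_two_general (α1 α2 : ℝ)
    (hα21 : α2 < 1) (hα1 : 1 < α1) :
    Dm 1 2 α1 α2 ≥ 2 / 3 := by
  rw [Dm_one_two]
  -- the two terms of the max average to (2 + α1) / 4 > 3 / 4
  exact le_min (by norm_num) (le_min (by linarith) (le_max_of_le_add_div_two (by linarith)))

/-- For the 3-user 1×2 channel in the mixed-interference regime, the GDOF is at
least 2/3, the GDOF achieved by an orthogonal scheme. -/
theorem Dm_ge_orthogonal_one_two (α1 α2 : ℝ)
    (hα2 : 0 < α2) (hα21 : α2 < 1) (hα1 : 1 < α1) :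
    Dm 1 2 α1 α2 ≥ 2 / 3 :=
  Dm_ge_orthogonal_one_two_general α1 α2 hα21 hα1
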